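/- arXiv:2303.12764 — 2 statements merged into one kernel-verified Lean document; each statement's English description precedes it below -/
import Mathlib

section
/- Assume Φ is irreducible. Then the Cartan matrix C of Φ is invertible over ℚ, and every entry of the inverse matrix C⁻¹ is a positive rational number. -/
/-!
A simple reflection applied to a simple root produces a root, whose coordinates all have one sign;
hence the off-diagonal Cartan entries are `≤ 0`, i.e. `C` is a Z-matrix. The reflection `s_j`
permutes `Φ⁺ ∖ {α_j}`, so the sum `2ρ` of the positive roots satisfies `⟨2ρ, α_j∨⟩ = 2`: its
coordinate vector `x` is positive with `C x > 0`. A Z-matrix admitting such an `x` is monotone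
(`C y ≥ 0 → y ≥ 0`), hence invertible with `C⁻¹ ≥ 0`. Finally, if a column `y` of `C⁻¹` had a zero
entry, the rows of `C y = e_j` indexed by the zeros of `y` force `C` to vanish between the zeros
and the support of `y`, which irreducibility forbids.
-/

open Matrix

namespace Matrix

variable {n 𝕜 : Type*} [Field 𝕜] [LinearOrder 𝕜] [IsStrictOrderedRing 𝕜]

def IsZMatrix (A : Matrix n n 𝕜) : Prop := ∀ i j, i ≠ j → A i j ≤ 0

namespace IsZMatrix

variable {A : Matrix n n 𝕜} {x y : n → 𝕜}

theorem mul_apply_nonpos (hA : A.IsZMatrix) (hy : 0 ≤ y) {a : n} (ha : y a = 0) (k : n) :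
    A a k * y k ≤ 0 := by
  by_cases hak : a = k
  · simp [← hak, ha]
  · exact mul_nonpos_of_nonpos_of_nonneg (hA a k hak) (hy k)

variable [Fintype n]

theorem mulVec_apply_nonpos (hA : A.IsZMatrix) (hy : 0 ≤ y) {a : n} (ha : y a = 0) :
    (A *ᵥ y) a ≤ 0 :=
  Finset.sum_nonpos fun k _ => hA.mul_apply_nonpos hy ha k

theorem apply_eq_zero_of_mulVec_apply_eq_zero (hA : A.IsZMatrix) (hy : 0 ≤ y) {a b : n}
    (ha : y a = 0) (hAy : (A *ᵥ y) a = 0) (hb : y b ≠ 0) : A a b = 0 :=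
  (mul_eq_zero.1 <| (Finset.sum_eq_zero_iff_of_nonpos fun k _ => hA.mul_apply_nonpos hy ha k).1
    hAy b (Finset.mem_univ b)).resolve_right hb

/-- Shift `y` by the least multiple `t • x` making it nonnegative: the result vanishes at some
`i₀`, where `A` maps it to something both `≤ 0` and `> 0`. -/
theorem nonneg_of_mulVec_nonneg (hA : A.IsZMatrix) (hx : ∀ i, 0 < x i)
    (hAx : ∀ i, 0 < (A *ᵥ x) i) (hAy : 0 ≤ A *ᵥ y) : 0 ≤ y := by
  intro i
  by_contra! hi
  obtain ⟨i₀, -, hmax⟩ :=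
    Finset.exists_max_image Finset.univ (fun k => -y k / x k) ⟨i, Finset.mem_univ i⟩
  set t := -y i₀ / x i₀
  have ht : 0 < t := (div_pos (neg_pos.2 hi) (hx i)).trans_le (hmax i (Finset.mem_univ i))
  have hz : 0 ≤ y + t • x := fun k => by
    have := (div_le_iff₀ (hx k)).1 (hmax k (Finset.mem_univ k))
    simp only [Pi.zero_apply, Pi.add_apply, Pi.smul_apply, smul_eq_mul]
    linarith
  have hz₀ : (y + t • x) i₀ = 0 := by
    simp [t, div_mul_cancel₀ _ (hx i₀).ne']
  have hAz := hA.mulVec_apply_nonpos hz hz₀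
  rw [mulVec_add, mulVec_smul, Pi.add_apply, Pi.smul_apply, smul_eq_mul] at hAz
  have hAy₀ : 0 ≤ (A *ᵥ y) i₀ := hAy i₀
  linarith [mul_pos ht (hAx i₀)]

theorem mulVec_injective (hA : A.IsZMatrix) (hx : ∀ i, 0 < x i) (hAx : ∀ i, 0 < (A *ᵥ x) i) :
    Function.Injective A.mulVec := by
  intro u v huv
  have h₁ : 0 ≤ u - v := hA.nonneg_of_mulVec_nonneg hx hAx (by rw [mulVec_sub, huv, sub_self])
  have h₂ : 0 ≤ v - u := hA.nonneg_of_mulVec_nonneg hx hAx (by rw [mulVec_sub, huv, sub_self])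
  exact le_antisymm (sub_nonneg.1 h₂) (sub_nonneg.1 h₁)

variable [DecidableEq n]

theorem isUnit (hA : A.IsZMatrix) (hx : ∀ i, 0 < x i) (hAx : ∀ i, 0 < (A *ᵥ x) i) : IsUnit A :=
  mulVec_injective_iff_isUnit.1 (hA.mulVec_injective hx hAx)

theorem inv_apply_pos (hA : A.IsZMatrix) (hx : ∀ i, 0 < x i) (hAx : ∀ i, 0 < (A *ᵥ x) i)
    (hirr : ¬ ∃ s : Set n, s.Nonempty ∧ sᶜ.Nonempty ∧ ∀ i ∈ s, ∀ j ∈ sᶜ, A j i = 0)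
    (i j : n) : 0 < A⁻¹ i j := by
  set y := A⁻¹ *ᵥ Pi.single j 1
  have hAy : A *ᵥ y = Pi.single j 1 := by
    rw [mulVec_mulVec, mul_nonsing_inv _ ((isUnit_iff_isUnit_det A).1 (hA.isUnit hx hAx)),
      one_mulVec]
  have he : 0 ≤ (Pi.single j 1 : n → 𝕜) := Pi.single_nonneg.2 zero_le_one
  have hy : 0 ≤ y := hA.nonneg_of_mulVec_nonneg hx hAx (hAy ▸ he)
  have hyj : y j ≠ 0 := fun h => by
    have := hA.mulVec_apply_nonpos hy h
    norm_num [hAy] at this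
  have hyi : y i = A⁻¹ i j := by simp [y]
  refine hyi ▸ (hy i).lt_of_ne' fun hi => hirr ⟨{k | y k ≠ 0}, ⟨j, hyj⟩, ⟨i, by simpa⟩, ?_⟩
  intro b hb a ha
  have ha : y a = 0 := by simpa using ha
  refine hA.apply_eq_zero_of_mulVec_apply_eq_zero hy ha ?_ hb
  exact le_antisymm (hA.mulVec_apply_nonpos hy ha) (by rw [hAy]; exact he a)

end IsZMatrix

end Matrix

namespace SimpleRoots

variable {𝕜 V ι : Type*} [Field 𝕜] [AddCommGroup V] [Module 𝕜 V]
  {coroot : V → Module.Dual 𝕜 V} {Δ : Module.Basis ι 𝕜 V}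

theorem mulVec_repr_eq_coroot [Fintype ι] {C : Matrix ι ι 𝕜}
    (hC : ∀ j i, C j i = coroot (Δ j) (Δ i)) (v : V) (j : ι) :
    (C *ᵥ Δ.repr v) j = coroot (Δ j) v := by
  simp only [mulVec, dotProduct, hC]
  conv_rhs => rw [← Δ.sum_repr v]
  simp only [map_sum, map_smul, smul_eq_mul, mul_comm]

variable [LinearOrder 𝕜] [IsStrictOrderedRing 𝕜] {Φ Φpos : Finset V}

theorem repr_nonneg_or_nonpos (hdecomp : ∀ γ ∈ Φ, γ ∈ Φpos ∨ -γ ∈ Φpos)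
    (hposcomb : ∀ γ ∈ Φpos, ∀ i, 0 ≤ Δ.repr γ i) {γ : V} (hγ : γ ∈ Φ) :
    (∀ i, 0 ≤ Δ.repr γ i) ∨ ∀ i, Δ.repr γ i ≤ 0 := by
  refine (hdecomp γ hγ).imp (hposcomb γ) fun h i => ?_
  simpa using hposcomb _ h i

theorem coroot_apply_simple_nonpos
    (hstab : ∀ γ ∈ Φ, ∀ δ ∈ Φ, δ - (coroot γ δ) • γ ∈ Φ) (hΔΦ : ∀ i, Δ i ∈ Φ)
    (hsign : ∀ γ ∈ Φ, (∀ i, 0 ≤ Δ.repr γ i) ∨ ∀ i, Δ.repr γ i ≤ 0) {i j : ι} (hij : i ≠ j) :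
    coroot (Δ j) (Δ i) ≤ 0 := by
  by_contra! hpos
  set β := Δ i - coroot (Δ j) (Δ i) • Δ j
  have hβi : Δ.repr β i = 1 := by simp [β, hij.symm]
  have hβj : Δ.repr β j = -coroot (Δ j) (Δ i) := by simp [β, hij]
  rcases hsign β (hstab _ (hΔΦ j) _ (hΔΦ i)) with h | h
  · linarith [h j]
  · linarith [h i]

theorem exists_repr_pos_of_ne_simple (hpossub : Φpos ⊆ Φ)
    (hred : ∀ γ ∈ Φ, ∀ t : 𝕜, t • γ ∈ Φ → t = 1 ∨ t = -1)
    (hposcomb : ∀ γ ∈ Φpos, ∀ i, 0 ≤ Δ.repr γ i) (hΔΦ : ∀ i, Δ i ∈ Φ) {j : ι} {γ : V}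
    (hγ : γ ∈ Φpos) (hne : γ ≠ Δ j) : ∃ i ≠ j, 0 < Δ.repr γ i := by
  classical
  by_contra! h
  have hγj : γ = Δ.repr γ j • Δ j := Δ.ext_elem fun i => by
    by_cases hij : i = j
    · simp [hij]
    · simpa [Finsupp.single_apply, Ne.symm hij] using le_antisymm (h i hij) (hposcomb γ hγ i)
  rcases hred _ (hΔΦ j) _ (hγj ▸ hpossub hγ) with h1 | h1
  · exact hne (by rw [hγj, h1, one_smul])
  · linarith [hposcomb γ hγ j]

theorem reflection_mem_pos_roots (hpossub : Φpos ⊆ Φ)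
    (hstab : ∀ γ ∈ Φ, ∀ δ ∈ Φ, δ - (coroot γ δ) • γ ∈ Φ)
    (hred : ∀ γ ∈ Φ, ∀ t : 𝕜, t • γ ∈ Φ → t = 1 ∨ t = -1)
    (hdecomp : ∀ γ ∈ Φ, γ ∈ Φpos ∨ -γ ∈ Φpos) (hposneg : ∀ γ ∈ Φpos, -γ ∉ Φpos)
    (hΔpos : ∀ i, Δ i ∈ Φpos) (hposcomb : ∀ γ ∈ Φpos, ∀ i, 0 ≤ Δ.repr γ i) {j : ι}
    (h2 : coroot (Δ j) (Δ j) = 2) {γ : V} (hγpos : γ ∈ Φpos) (hne : γ ≠ Δ j) :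
    Module.reflection h2 γ ∈ Φpos ∧ Module.reflection h2 γ ≠ Δ j := by
  classical
  have hΔΦ i : Δ i ∈ Φ := hpossub (hΔpos i)
  obtain ⟨i, hij, hi⟩ := exists_repr_pos_of_ne_simple hpossub hred hposcomb hΔΦ hγpos hne
  have hsγ : Module.reflection h2 γ ∈ Φ := by
    rw [Module.reflection_apply]
    exact hstab _ (hΔΦ j) _ (hpossub hγpos)
  have hsγi : Δ.repr (Module.reflection h2 γ) i = Δ.repr γ i := by
    simp [Module.reflection_apply, hij.symm]
  refine ⟨(hdecomp _ hsγ).resolve_right fun hneg => ?_, fun hsγj => hposneg _ (hΔpos j) ?_⟩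
  · have := hposcomb _ hneg i
    simp only [map_neg, Finsupp.coe_neg, Pi.neg_apply, hsγi] at this
    linarith
  · have h := congrArg (Module.reflection h2) hsγj
    rw [Module.involutive_reflection h2 γ, Module.reflection_apply_self] at h
    exact h ▸ hγpos

/-- The reflection in `Δ j` permutes the other positive roots, so it fixes their sum. -/
theorem coroot_apply_sum_pos_roots (hpossub : Φpos ⊆ Φ)
    (hstab : ∀ γ ∈ Φ, ∀ δ ∈ Φ, δ - (coroot γ δ) • γ ∈ Φ)
    (hred : ∀ γ ∈ Φ, ∀ t : 𝕜, t • γ ∈ Φ → t = 1 ∨ t = -1)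
    (hdecomp : ∀ γ ∈ Φ, γ ∈ Φpos ∨ -γ ∈ Φpos) (hposneg : ∀ γ ∈ Φpos, -γ ∉ Φpos)
    (hΔpos : ∀ i, Δ i ∈ Φpos) (hposcomb : ∀ γ ∈ Φpos, ∀ i, 0 ≤ Δ.repr γ i) {j : ι}
    (h2 : coroot (Δ j) (Δ j) = 2) : coroot (Δ j) (∑ γ ∈ Φpos, γ) = 2 := by
  classical
  set s := Module.reflection h2
  have hmaps : ∀ γ ∈ Φpos.erase (Δ j), s γ ∈ Φpos.erase (Δ j) := fun γ hγ => by
    obtain ⟨hne, hγpos⟩ := Finset.mem_erase.1 hγ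
    obtain ⟨hsγpos, hsγne⟩ :=
      reflection_mem_pos_roots hpossub hstab hred hdecomp hposneg hΔpos hposcomb h2 hγpos hne
    exact Finset.mem_erase.2 ⟨hsγne, hsγpos⟩
  have hfix : s (∑ γ ∈ Φpos.erase (Δ j), γ) = ∑ γ ∈ Φpos.erase (Δ j), γ := by
    rw [map_sum]
    exact Finset.sum_nbij' s s hmaps hmaps (fun γ _ => Module.involutive_reflection h2 γ)
      (fun γ _ => Module.involutive_reflection h2 γ) fun _ _ => rfl
  rw [Module.reflection_apply, sub_eq_self, smul_eq_zero] at hfix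
  rw [← Finset.add_sum_erase _ _ (hΔpos j), map_add, h2, hfix.resolve_right (Δ.ne_zero j),
    add_zero]

theorem one_le_repr_sum_pos_roots (hΔpos : ∀ i, Δ i ∈ Φpos)
    (hposcomb : ∀ γ ∈ Φpos, ∀ i, 0 ≤ Δ.repr γ i) (i : ι) : 1 ≤ Δ.repr (∑ γ ∈ Φpos, γ) i := by
  classical
  rw [← Finset.add_sum_erase _ _ (hΔpos i), map_add, Finsupp.add_apply, Δ.repr_self,
    Finsupp.single_eq_same, le_add_iff_nonneg_right, map_sum, Finsupp.coe_finsetSum,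
    Finset.sum_apply]
  exact Finset.sum_nonneg fun γ hγ => hposcomb γ (Finset.mem_of_mem_erase hγ) i

end SimpleRoots

open SimpleRoots

theorem cartan_matrix_inverse_entries_pos_general
    {V : Type*} [AddCommGroup V] [Module ℚ V]
    {r : ℕ}
    -- the (finite, reduced, crystallographic) root system Φ spanning V
    (Φ : Finset V)
    -- coroots, viewed via the evaluation pairing ⟨v, μ⟩ = μ v
    (coroot : V → Module.Dual ℚ V)
    (hcr2 : ∀ γ ∈ Φ, coroot γ γ = 2)
    (hstab : ∀ γ ∈ Φ, ∀ δ ∈ Φ, δ - (coroot γ δ) • γ ∈ Φ)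
    (hred : ∀ γ ∈ Φ, ∀ t : ℚ, t • γ ∈ Φ → t = 1 ∨ t = -1)
    -- a fixed positive system Φ⁺
    (Φpos : Finset V) (hpossub : Φpos ⊆ Φ)
    (hdecomp : ∀ γ ∈ Φ, γ ∈ Φpos ∨ -γ ∈ Φpos)
    (hposneg : ∀ γ ∈ Φpos, -γ ∉ Φpos)
    -- the simple roots Δ, forming a basis of V, every positive root being a
    -- nonnegative combination of them
    (Δ : Module.Basis (Fin r) ℚ V) (hΔpos : ∀ i, Δ i ∈ Φpos)
    (hposcomb : ∀ γ ∈ Φpos, ∀ i, 0 ≤ Δ.repr γ i)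
    -- the Cartan matrix
    (C : Matrix (Fin r) (Fin r) ℚ)
    (hC : ∀ j i, C j i = coroot (Δ j) (Δ i))
    -- Φ is irreducible
    (hirr : ¬ ∃ s : Set (Fin r), s.Nonempty ∧ sᶜ.Nonempty ∧
        ∀ i ∈ s, ∀ j ∈ sᶜ, coroot (Δ j) (Δ i) = 0) :
    IsUnit C ∧ ∀ i j, 0 < C⁻¹ i j := by
  have hΔΦ i : Δ i ∈ Φ := hpossub (hΔpos i)
  have hZ : C.IsZMatrix := fun j i hji => (hC j i).trans_le <|
    coroot_apply_simple_nonpos hstab hΔΦ (fun _ => repr_nonneg_or_nonpos hdecomp hposcomb)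
      hji.symm
  set x : Fin r → ℚ := ⇑(Δ.repr (∑ γ ∈ Φpos, γ))
  have hx i : 0 < x i := one_pos.trans_le (one_le_repr_sum_pos_roots hΔpos hposcomb i)
  have hCx j : 0 < (C *ᵥ x) j := by
    rw [mulVec_repr_eq_coroot hC, coroot_apply_sum_pos_roots hpossub hstab hred hdecomp
      hposneg hΔpos hposcomb (hcr2 _ (hΔΦ j))]
    exact two_pos
  have hCirr : ¬ ∃ s : Set (Fin r), s.Nonempty ∧ sᶜ.Nonempty ∧ ∀ i ∈ s, ∀ j ∈ sᶜ, C j i = 0 := by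
    simpa only [hC] using hirr
  exact ⟨hZ.isUnit hx hCx, hZ.inv_apply_pos hx hCx hCirr⟩

theorem cartan_matrix_inverse_entries_pos
    {V : Type*} [AddCommGroup V] [Module ℚ V] [FiniteDimensional ℚ V]
    {r : ℕ}
    -- the (finite, reduced, crystallographic) root system Φ spanning V
    (Φ : Finset V) (hΦspan : Submodule.span ℚ (Φ : Set V) = ⊤)
    (hΦ0 : (0 : V) ∉ Φ)
    -- coroots, viewed via the evaluation pairing ⟨v, μ⟩ = μ v
    (coroot : V → Module.Dual ℚ V)
    (hcr2 : ∀ γ ∈ Φ, coroot γ γ = 2)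
    (hstab : ∀ γ ∈ Φ, ∀ δ ∈ Φ, δ - (coroot γ δ) • γ ∈ Φ)
    (hcrys : ∀ γ ∈ Φ, ∀ δ ∈ Φ, ∃ n : ℤ, coroot γ δ = (n : ℚ))
    (hred : ∀ γ ∈ Φ, ∀ t : ℚ, t • γ ∈ Φ → t = 1 ∨ t = -1)
    -- a fixed positive system Φ⁺
    (Φpos : Finset V) (hpossub : Φpos ⊆ Φ)
    (hdecomp : ∀ γ ∈ Φ, γ ∈ Φpos ∨ -γ ∈ Φpos)
    (hposneg : ∀ γ ∈ Φpos, -γ ∉ Φpos)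
    -- the simple roots Δ, forming a basis of V, every positive root being a
    -- nonnegative combination of them
    (Δ : Module.Basis (Fin r) ℚ V) (hΔpos : ∀ i, Δ i ∈ Φpos)
    (hposcomb : ∀ γ ∈ Φpos, ∀ i, 0 ≤ Δ.repr γ i)
    -- the simple coroots form a basis of the dual space
    (Δv : Module.Basis (Fin r) ℚ (Module.Dual ℚ V)) (hΔv : ∀ i, Δv i = coroot (Δ i))
    -- the Cartan matrix
    (C : Matrix (Fin r) (Fin r) ℚ)
    (hC : ∀ j i, C j i = coroot (Δ j) (Δ i))
    -- Φ is irreducible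
    (hirr : ¬ ∃ s : Set (Fin r), s.Nonempty ∧ sᶜ.Nonempty ∧
        ∀ i ∈ s, ∀ j ∈ sᶜ, coroot (Δ j) (Δ i) = 0) :
    IsUnit C ∧ ∀ i j, 0 < C⁻¹ i j :=
  cartan_matrix_inverse_entries_pos_general Φ coroot hcr2 hstab hred Φpos hpossub hdecomp hposneg Δ
    hΔpos hposcomb C hC hirr
end

section
/- Let μ ∈ V* satisfy ⟨α, μ⟩ > 0 for every α ∈ Δ, and suppose μ = Σ_{α∈Δ} n_α α∨ with all n_α ∈ ℚ_{≥0}. Let I ⊊ Δ and let w ∈ W^I ∩ Ω_I. Then w ∈ Ω_∅; that is, if (wμ, ϖ_α) > 0 for all α ∈ Δ ∖ I and w⁻¹γ ∈ Φ⁺ for all γ ∈ Φ_I⁺, then (wμ, ϖ_α) > 0 for all α ∈ Δ. Equivalently, writing wμ = Σ_{α∈Δ} m_α α∨, if m_α > 0 for all α ∉ I then m_α > 0 for all α ∈ Δ. -/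
/-!
Write `wμ = ∑ m_α α∨`. Invariance of `(·,·)` under the reflection `s_α` gives
`2 (α∨, ν) = ⟨α, ν⟩ (α∨, α∨)`; hence `m_α` has the sign of `(wμ, ϖ_α)`, and the simple coroots
pairwise make obtuse angles because the Cartan integers `⟨α, β∨⟩`, `α ≠ β`, are nonpositive.
For `α ∈ I` we have `⟨α, wμ⟩ = ⟨w⁻¹α, μ⟩ > 0` since `w⁻¹α` is a positive root.
So each `α` has `m_α > 0` or `(α∨, wμ) > 0`. If `J = {α : m_α ≤ 0}` were nonempty, then
`ν = ∑_{α ∈ J} m_α α∨` would satisfy `(α∨, ν) ≥ (α∨, wμ) > 0` for `α ∈ J`, whence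
`(ν, ν) = ∑_{α ∈ J} m_α (α∨, ν) ≤ 0`, so `ν = 0`: a contradiction.
-/

open Module Finset

section

variable {R V : Type*} [CommRing R] [AddCommGroup V] [Module R V]

theorem Module.reflection_symm_dualMap_apply {x : V} {f : Dual R V} (h : f x = 2)
    (ν : Dual R V) :
    (reflection h).symm.dualMap ν = ν - ν x • f := by
  ext v
  simp [reflection_apply, mul_comm]

theorem two_mul_apply_eq_of_reflection_invariant {x : V} {f : Dual R V} (h : f x = 2)
    (B : Dual R V →ₗ[R] Dual R V →ₗ[R] R)
    (hB : ∀ μ ν, B ((reflection h).symm.dualMap μ) ((reflection h).symm.dualMap ν) = B μ ν)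
    (ν : Dual R V) : 2 * B f ν = ν x * B f f := by
  have := hB f ν
  simp only [reflection_symm_dualMap_apply, h, map_sub, map_smul, LinearMap.sub_apply,
    LinearMap.smul_apply, smul_eq_mul] at this
  linear_combination -this

theorem two_mul_apply_coweight {ι : Type*} [Fintype ι] [DecidableEq ι] (Δ : ι → V)
    (Δv : Basis ι R (Dual R V)) (ϖ : ι → Dual R V)
    (hϖ : ∀ i j, ϖ i (Δ j) = if j = i then 1 else 0) (B : Dual R V →ₗ[R] Dual R V →ₗ[R] R)
    (hB : ∀ j ν, 2 * B (Δv j) ν = ν (Δ j) * B (Δv j) (Δv j)) (l : Dual R V) (i : ι) :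
    2 * B l (ϖ i) = Δv.repr l i * B (Δv i) (Δv i) := by
  conv_lhs => rw [← Δv.sum_repr l]
  simp only [map_sum, map_smul, LinearMap.sum_apply, LinearMap.smul_apply, smul_eq_mul,
    mul_sum, mul_left_comm (2 : R), hB, hϖ]
  simp

end

section Ordered

variable {𝕜 : Type*} [Field 𝕜] [LinearOrder 𝕜] [IsStrictOrderedRing 𝕜]

theorem pos_coeff_of_obtuse_of_forall_pos_or {E ι : Type*} [AddCommGroup E] [Module 𝕜 E]
    [Fintype ι] (B : E →ₗ[𝕜] E →ₗ[𝕜] 𝕜) (hB : ∀ u, u ≠ 0 → 0 < B u u) (v : ι → E)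
    (hv : Pairwise fun i j ↦ B (v i) (v j) ≤ 0) (m : ι → 𝕜)
    (h : ∀ i, 0 < m i ∨ 0 < B (v i) (∑ j, m j • v j)) (i : ι) : 0 < m i := by
  classical
  by_contra! hi
  set J := univ.filter (m · ≤ 0)
  set u := ∑ j ∈ J, m j • v j
  have hu : ∀ k ∈ J, 0 < B (v k) u := by
    intro k hk
    have hmk : m k ≤ 0 := (mem_filter.mp hk).2
    have hrest : ∑ j ∈ univ.filter (¬m · ≤ 0), m j * B (v k) (v j) ≤ 0 := by
      refine sum_nonpos fun j hj ↦ mul_nonpos_of_nonneg_of_nonpos ?_ (hv ?_)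
      · exact (not_le.mp (mem_filter.mp hj).2).le
      · rintro rfl
        exact (mem_filter.mp hj).2 hmk
    have hsplit : B (v k) (∑ j, m j • v j)
        = B (v k) u + ∑ j ∈ univ.filter (¬m · ≤ 0), m j * B (v k) (v j) := by
      rw [← sum_filter_add_sum_filter_not univ (m · ≤ 0)]
      simp [u, J, map_sum, map_smul]
    have := (h k).resolve_left hmk.not_gt
    linarith
  have huu : B u u ≤ 0 := by
    have hexp : ∀ w, B u w = ∑ k ∈ J, m k * B (v k) w := fun w ↦ by
      simp [u, map_sum, map_smul]
    rw [hexp]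
    exact sum_nonpos fun k hk ↦
      mul_nonpos_of_nonpos_of_nonneg (mem_filter.mp hk).2 (hu k hk).le
  have hu0 : u = 0 := by
    by_contra hne
    exact (hB u hne).not_ge huu
  have := hu i (mem_filter.mpr ⟨mem_univ i, hi⟩)
  simp [hu0] at this

variable {V ι : Type*} [AddCommGroup V] [Module 𝕜 V]

theorem Module.Basis.apply_pos_of_repr_nonneg [Fintype ι] (Δ : Basis ι 𝕜 V) {μ : Dual 𝕜 V}
    (hμ : ∀ i, 0 < μ (Δ i)) {γ : V} (hγ0 : γ ≠ 0) (hγ : ∀ i, 0 ≤ Δ.repr γ i) : 0 < μ γ := by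
  obtain ⟨j, hj⟩ : ∃ j, Δ.repr γ j ≠ 0 := by
    by_contra! hall
    exact hγ0 (Δ.repr.map_eq_zero_iff.mp (Finsupp.ext hall))
  rw [← Δ.sum_repr γ]
  simp only [map_sum, map_smul, smul_eq_mul]
  exact sum_pos' (fun i _ ↦ mul_nonneg (hγ i) (hμ i).le)
    ⟨j, mem_univ j, mul_pos ((hγ j).lt_of_ne' hj) (hμ j)⟩

theorem Module.Basis.nonpos_of_sub_smul_repr_nonneg_or_nonpos (Δ : Basis ι 𝕜 V) {i j : ι}
    (hij : i ≠ j) {c : 𝕜}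
    (h : (∀ k, 0 ≤ Δ.repr (Δ i - c • Δ j) k) ∨ ∀ k, Δ.repr (Δ i - c • Δ j) k ≤ 0) : c ≤ 0 := by
  rcases h with h | h
  · simpa [Finsupp.single_apply, hij] using h j
  · exact absurd (by simpa [Finsupp.single_apply, hij] using h i) (one_pos (α := 𝕜)).not_ge

theorem coroot_apply_simpleRoot_nonpos {Φ Φpos : Set V} (hpossub : Φpos ⊆ Φ)
    (hdecomp : ∀ γ ∈ Φ, γ ∈ Φpos ∨ -γ ∈ Φpos) (Δ : Basis ι 𝕜 V) (hΔpos : ∀ i, Δ i ∈ Φpos)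
    (hposcomb : ∀ γ ∈ Φpos, ∀ i, 0 ≤ Δ.repr γ i) (coroot : V → Dual 𝕜 V)
    (hstab : ∀ γ ∈ Φ, ∀ δ ∈ Φ, δ - coroot γ δ • γ ∈ Φ) {i j : ι} (hij : i ≠ j) :
    coroot (Δ j) (Δ i) ≤ 0 := by
  refine Δ.nonpos_of_sub_smul_repr_nonneg_or_nonpos hij ?_
  rcases hdecomp _ (hstab _ (hpossub (hΔpos j)) _ (hpossub (hΔpos i))) with h | h
  · exact Or.inl (hposcomb _ h)
  · exact Or.inr fun k ↦ by simpa using hposcomb _ h k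

end Ordered

theorem mem_omega_empty_of_mem_omega_general
    {V : Type*} [AddCommGroup V] [Module ℚ V]
    {ι : Type*} [Fintype ι] [DecidableEq ι]
    -- the (finite, reduced, crystallographic) root system Φ spanning V
    (Φ : Finset V)
    (hΦ0 : (0 : V) ∉ Φ)
    -- coroots, viewed via the evaluation pairing ⟨v, μ⟩ = μ v
    (coroot : V → Module.Dual ℚ V)
    (hcr2 : ∀ γ ∈ Φ, coroot γ γ = 2)
    (hstab : ∀ γ ∈ Φ, ∀ δ ∈ Φ, δ - (coroot γ δ) • γ ∈ Φ)
    -- a fixed positive system Φ⁺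
    (Φpos : Finset V) (hpossub : Φpos ⊆ Φ)
    (hdecomp : ∀ γ ∈ Φ, γ ∈ Φpos ∨ -γ ∈ Φpos)
    -- the simple roots Δ, forming a basis of V, every positive root being a
    -- nonnegative combination of them
    (Δ : Module.Basis ι ℚ V) (hΔpos : ∀ i, Δ i ∈ Φpos)
    (hposcomb : ∀ γ ∈ Φpos, ∀ i, 0 ≤ Δ.repr γ i)
    -- the simple coroots form a basis of the dual space
    (Δv : Module.Basis ι ℚ (Module.Dual ℚ V)) (hΔv : ∀ i, Δv i = coroot (Δ i))
    -- the fundamental coweights: the basis of V* dual to the simple roots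
    (ϖ : ι → Module.Dual ℚ V) (hϖ : ∀ i j, ϖ i (Δ j) = if j = i then 1 else 0)
    -- a W-invariant inner product on V* (W acting contragrediently on V*)
    (B : Module.Dual ℚ V →ₗ[ℚ] Module.Dual ℚ V →ₗ[ℚ] ℚ)
    (hBposdef : ∀ μ : Module.Dual ℚ V, μ ≠ 0 → 0 < B μ μ)
    (hBinv : ∀ w ∈ Subgroup.closure
        {w : V ≃ₗ[ℚ] V | ∃ γ, ∃ hγ : γ ∈ Φ, w = Module.reflection (hcr2 γ hγ)},
      ∀ μ ν : Module.Dual ℚ V, B (w.symm.dualMap μ) (w.symm.dualMap ν) = B μ ν) :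
    ∀ (μ : Module.Dual ℚ V) (n : ι → ℚ),
      (∀ i, 0 < μ (Δ i)) →
      (∀ i, 0 ≤ n i) →
      μ = (∑ i, n i • coroot (Δ i)) →
      ∀ (I : Set ι), I ≠ Set.univ →
      ∀ w ∈ Subgroup.closure
          {w : V ≃ₗ[ℚ] V | ∃ γ, ∃ hγ : γ ∈ Φ, w = Module.reflection (hcr2 γ hγ)},
        (∀ γ ∈ Φpos, γ ∈ Submodule.span ℚ (⇑Δ '' I) → w⁻¹ γ ∈ Φpos) →
        (∀ i ∉ I, 0 < B (w.symm.dualMap μ) (ϖ i)) →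
        ∀ i, 0 < B (w.symm.dualMap μ) (ϖ i) := by
  intro μ _ hμ _ _ I _ w _ hwI hΩ
  have hBΔv : ∀ j ν, 2 * B (Δv j) ν = ν (Δ j) * B (Δv j) (Δv j) := fun j ↦ by
    have hroot := hpossub (hΔpos j)
    rw [hΔv]
    exact two_mul_apply_eq_of_reflection_invariant (hcr2 _ hroot) B
      (hBinv _ (Subgroup.subset_closure ⟨_, hroot, rfl⟩))
  have hBΔv_pos : ∀ j, 0 < B (Δv j) (Δv j) := fun j ↦ hBposdef _ (Δv.ne_zero j)
  have hsign : ∀ {a b : ℚ} (j : ι), 2 * a = b * B (Δv j) (Δv j) → (0 < a ↔ 0 < b) :=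
    fun j h ↦ by
      rw [← mul_pos_iff_of_pos_left two_pos, h, mul_pos_iff_of_pos_right (hBΔv_pos j)]
  set l := w.symm.dualMap μ
  have hcoweight : ∀ i, 0 < B l (ϖ i) ↔ 0 < Δv.repr l i :=
    fun i ↦ hsign i (two_mul_apply_coweight Δ Δv ϖ hϖ B hBΔv l i)
  intro i
  rw [hcoweight]
  refine pos_coeff_of_obtuse_of_forall_pos_or B hBposdef Δv ?_ (Δv.repr l) ?_ i
  · intro j k hjk
    rw [← not_lt, hsign j (hBΔv j (Δv k)), not_lt, hΔv]
    exact coroot_apply_simpleRoot_nonpos hpossub hdecomp Δ hΔpos hposcomb coroot hstab hjk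
  · intro j
    rw [Δv.sum_repr l]
    by_cases hj : j ∈ I
    · refine Or.inr ((hsign j (hBΔv j l)).mpr ?_)
      have hpos := hwI _ (hΔpos j) (Submodule.subset_span ⟨j, hj, rfl⟩)
      exact Δ.apply_pos_of_repr_nonneg hμ (fun h0 ↦ hΦ0 (h0 ▸ hpossub hpos)) (hposcomb _ hpos)
    · exact Or.inl ((hcoweight j).mp (hΩ j hj))

theorem mem_omega_empty_of_mem_omega
    {V : Type*} [AddCommGroup V] [Module ℚ V] [FiniteDimensional ℚ V]
    {ι : Type*} [Fintype ι] [DecidableEq ι]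
    -- the (finite, reduced, crystallographic) root system Φ spanning V
    (Φ : Finset V) (hΦspan : Submodule.span ℚ (Φ : Set V) = ⊤)
    (hΦ0 : (0 : V) ∉ Φ)
    -- coroots, viewed via the evaluation pairing ⟨v, μ⟩ = μ v
    (coroot : V → Module.Dual ℚ V)
    (hcr2 : ∀ γ ∈ Φ, coroot γ γ = 2)
    (hstab : ∀ γ ∈ Φ, ∀ δ ∈ Φ, δ - (coroot γ δ) • γ ∈ Φ)
    (hcrys : ∀ γ ∈ Φ, ∀ δ ∈ Φ, ∃ n : ℤ, coroot γ δ = (n : ℚ))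
    (hred : ∀ γ ∈ Φ, ∀ t : ℚ, t • γ ∈ Φ → t = 1 ∨ t = -1)
    -- a fixed positive system Φ⁺
    (Φpos : Finset V) (hpossub : Φpos ⊆ Φ)
    (hdecomp : ∀ γ ∈ Φ, γ ∈ Φpos ∨ -γ ∈ Φpos)
    (hposneg : ∀ γ ∈ Φpos, -γ ∉ Φpos)
    -- the simple roots Δ, forming a basis of V, every positive root being a
    -- nonnegative combination of them
    (Δ : Module.Basis ι ℚ V) (hΔpos : ∀ i, Δ i ∈ Φpos)
    (hposcomb : ∀ γ ∈ Φpos, ∀ i, 0 ≤ Δ.repr γ i)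
    -- the simple coroots form a basis of the dual space
    (Δv : Module.Basis ι ℚ (Module.Dual ℚ V)) (hΔv : ∀ i, Δv i = coroot (Δ i))
    -- the fundamental coweights: the basis of V* dual to the simple roots
    (ϖ : ι → Module.Dual ℚ V) (hϖ : ∀ i j, ϖ i (Δ j) = if j = i then 1 else 0)
    -- a W-invariant inner product on V* (W acting contragrediently on V*)
    (B : Module.Dual ℚ V →ₗ[ℚ] Module.Dual ℚ V →ₗ[ℚ] ℚ)
    (hBsymm : ∀ μ ν, B μ ν = B ν μ)
    (hBposdef : ∀ μ : Module.Dual ℚ V, μ ≠ 0 → 0 < B μ μ)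
    (hBinv : ∀ w ∈ Subgroup.closure
        {w : V ≃ₗ[ℚ] V | ∃ γ, ∃ hγ : γ ∈ Φ, w = Module.reflection (hcr2 γ hγ)},
      ∀ μ ν : Module.Dual ℚ V, B (w.symm.dualMap μ) (w.symm.dualMap ν) = B μ ν) :
    ∀ (μ : Module.Dual ℚ V) (n : ι → ℚ),
      (∀ i, 0 < μ (Δ i)) →
      (∀ i, 0 ≤ n i) →
      μ = (∑ i, n i • coroot (Δ i)) →
      ∀ (I : Set ι), I ≠ Set.univ →
      ∀ w ∈ Subgroup.closure
          {w : V ≃ₗ[ℚ] V | ∃ γ, ∃ hγ : γ ∈ Φ, w = Module.reflection (hcr2 γ hγ)},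
        (∀ γ ∈ Φpos, γ ∈ Submodule.span ℚ (⇑Δ '' I) → w⁻¹ γ ∈ Φpos) →
        (∀ i ∉ I, 0 < B (w.symm.dualMap μ) (ϖ i)) →
        ∀ i, 0 < B (w.symm.dualMap μ) (ϖ i) :=
  mem_omega_empty_of_mem_omega_general Φ hΦ0 coroot hcr2 hstab Φpos hpossub hdecomp Δ hΔpos hposcomb
    Δv hΔv ϖ hϖ B hBposdef hBinv
end
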